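/- Let (G,l) be a finite connected ℕ-labelled graph. The map ε̄ : coker(δ) → coker(δ̃) from the cokernel of the multidegree operator of (G,l) to the cokernel of the Laplacian of the total blow-up graph (G̃,l̃) is an isomorphism if and only if (G,l) is circuit-coprime. -/

import Mathlib

/-- A multigraph: vertices `V`, edges `E`, source/target maps (loops and multiple
edges allowed). -/
structure Multigraph (V E : Type*) where
  s : E → V
  t : E → V

namespace Multigraph

variable {V E : Type*} (G : Multigraph V E)

/-- The edge `e` has endpoints `a` and `b`. -/
def Connects (e : E) (a b : V) : Prop :=
  (G.s e = a ∧ G.t e = b) ∨ (G.s e = b ∧ G.t e = a)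

/-- Two vertices are connected by a walk. -/
def Reachable : V → V → Prop :=
  Relation.ReflTransGen (fun a b => ∃ e, G.Connects e a b)

/-- The graph is connected. -/
def Connected : Prop := ∀ a b : V, G.Reachable a b

/-- The cyclic successor on `Fin m`. -/
def cyc {m : ℕ} (i : Fin m) : Fin m :=
  ⟨(i.1 + 1) % m, Nat.mod_lt _ (Nat.lt_of_le_of_lt (Nat.zero_le _) i.isLt)⟩

/-- A circuit: a closed walk with all edges and vertices distinct. -/
def IsCircuit {m : ℕ} (v : Fin m → V) (ed : Fin m → E) : Prop :=
  0 < m ∧ Function.Injective v ∧ Function.Injective ed ∧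
    ∀ i, G.Connects (ed i) (v i) (v (cyc i))

/-- `(G, l)` is circuit-coprime: the labels of the edges of any circuit have gcd `1`. -/
def CircuitCoprime (l : E → ℕ) : Prop :=
  ∀ (m : ℕ) (v : Fin m → V) (ed : Fin m → E), G.IsCircuit v ed →
    Finset.univ.gcd (fun i : Fin m => l (ed i)) = 1

/-- A vertex labelling `φ : V → ℤ` is Cartier (w.r.t. the edge labelling `l`) if for every
edge `e` with endpoints `v, w`, `l e` divides `φ v - φ w`. -/
def Cartier (l : E → ℕ) (φ : V → ℤ) : Prop :=
  ∀ e : E, (l e : ℤ) ∣ (φ (G.s e) - φ (G.t e))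

/-- The multidegree operator: `(mdeg l φ) v` is the sum over edges `e` incident to `v` of
`(φ w - φ v) / l e`, `w` being the other endpoint of `e`.  For the constant labelling `1`
this is the graph Laplacian. -/
def mdeg [Fintype E] [DecidableEq V] (l : E → ℕ) (φ : V → ℤ) : V → ℤ := fun v =>
  ∑ e : E,
    ((if G.s e = v then (φ (G.t e) - φ (G.s e)) / (l e : ℤ) else 0) +
      (if G.t e = v then (φ (G.s e) - φ (G.t e)) / (l e : ℤ) else 0))

/-- The total blow-up graph `(G̃, l̃)` of `(G, l)`: every edge `e` is replaced by a path of
`l e` edges (all labelled `1`), introducing `l e - 1` new vertices. -/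
def blowup (l : E → ℕ) :
    Multigraph (V ⊕ Σ e : E, Fin (l e - 1)) (Σ e : E, Fin (l e)) where
  s := fun p =>
    if h : (p.2 : ℕ) = 0 then Sum.inl (G.s p.1)
    else Sum.inr ⟨p.1, ⟨(p.2 : ℕ) - 1, by have := p.2.isLt; omega⟩⟩
  t := fun p =>
    if h : (p.2 : ℕ) = l p.1 - 1 then Sum.inl (G.t p.1)
    else Sum.inr ⟨p.1, ⟨(p.2 : ℕ), by have := p.2.isLt; omega⟩⟩

/-- The `j`-th vertex `w_j` (for `0 ≤ j ≤ l e`) of the path in the total blow-up graph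
replacing the edge `e`; `w_0` and `w_(l e)` are the old endpoints of `e`. -/
def pathVertex (l : E → ℕ) (e : E) (j : ℕ) : V ⊕ Σ e : E, Fin (l e - 1) :=
  if h0 : j = 0 then Sum.inl (G.s e)
  else if h : j < l e then Sum.inr ⟨e, ⟨j - 1, by omega⟩⟩
  else Sum.inl (G.t e)

end Multigraph

/-- The characteristic function `χ_v` of a vertex. -/
def chi {W : Type*} [DecidableEq W] (v : W) : W → ℤ := fun u => if u = v then 1 else 0

/-!
Along the path of `G̃` replacing an edge `e`, the Laplacian at the new vertices is the second
difference of `ψ`, so summation by parts gives `∑ₖ (k + 1) (δ̃ ψ)(wₖ) ≡ ψ(s e) - ψ(t e)` modulo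
`l e`. Hence `ε̄` is surjective exactly when the coboundary `ℤ^V → ∏ₑ ℤ/l(e)`,
`φ ↦ (φ(s e) - φ(t e))ₑ`, is surjective; and `ε̄` is always injective, because a `ψ` whose
Laplacian vanishes at the new vertices is affine along every path, so its restriction to `V` is
Cartier with multidegree the Laplacian of `ψ`.

The coboundary modulo the labels is surjective iff `(G, l)` is circuit-coprime. Around a circuit
whose labels share a prime `p` the signed coboundaries telescope to `0`, so no `φ` is `1` on one
edge of the circuit and `0` on the others modulo `p`. Conversely, for an edge `e₀` and a prime
`p ∣ l e₀`, the other edges with label divisible by `p` cannot join the ends of `e₀` (that would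
close such a circuit), and a cut separating them yields a residue at `e₀` prime to `p`; the
residues realisable at `e₀` alone form a subgroup of `ℤ` contained in no `pℤ`, so they contain `1`.
-/

section SecondDifference

open Finset

def secondDiff (a : ℕ → ℤ) (k : ℕ) : ℤ := a k - 2 * a (k + 1) + a (k + 2)

theorem sub_eq_mul_add_sum_secondDiff (a : ℕ → ℤ) {n : ℕ} (hn : 1 ≤ n) :
    a 0 - a n = n * (a (n - 1) - a n) + ∑ j ∈ range (n - 1), (j + 1) * secondDiff a j := by
  obtain ⟨m, rfl⟩ := Nat.exists_eq_add_of_le' hn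
  clear hn
  induction m with
  | zero => simp
  | succ m ih =>
    simp only [Nat.add_sub_cancel] at ih ⊢
    rw [sum_range_succ, secondDiff]
    push_cast at ih ⊢
    linarith

theorem eq_add_mul_of_secondDiff_eq_zero {a : ℕ → ℤ} {n : ℕ}
    (ha : ∀ k, k + 2 ≤ n → secondDiff a k = 0) {j : ℕ} (hj : j ≤ n) :
    a j = a 0 + j * (a 1 - a 0) := by
  have hstep : ∀ i, i + 1 ≤ n → a (i + 1) - a i = a 1 - a 0 := by
    intro i hi
    induction i with
    | zero => rfl
    | succ i ih =>
      have := ha i (by omega)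
      rw [secondDiff] at this
      linarith [ih (by omega)]
  have htel := sum_range_sub a j
  rw [sum_congr rfl fun i hi => hstep i (by rw [mem_range] at hi; omega), sum_const,
    card_range, nsmul_eq_mul] at htel
  linarith

theorem exists_secondDiff_eq {n : ℕ} (hn : 1 ≤ n) (b : ℕ → ℤ) (x y : ℤ)
    (h : (n : ℤ) ∣ x - y - ∑ j ∈ range (n - 1), (j + 1) * b j) :
    ∃ a : ℕ → ℤ, a 0 = x ∧ a n = y ∧ ∀ k, secondDiff a k = b k := by
  let g : ℕ → ℤ := fun j => ∑ i ∈ range j, ∑ t ∈ range i, b t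
  have hg : ∀ k, secondDiff g k = b k := fun k => by
    simp only [secondDiff, g, sum_range_succ]
    ring
  have hgn := sub_eq_mul_add_sum_secondDiff g hn
  simp only [hg] at hgn
  have hg₀ : g 0 = 0 := sum_range_zero _
  obtain ⟨d, hd⟩ : (n : ℤ) ∣ y - x - g n := by
    rw [show y - x - g n = n * (g (n - 1) - g n) - (x - y - ∑ j ∈ range (n - 1), (j + 1) * b j)
      by linarith]
    exact dvd_sub (dvd_mul_right _ _) h
  refine ⟨fun j => x + j * d + g j, by simp [hg₀], by push_cast; linarith, fun k => ?_⟩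
  rw [← hg, secondDiff, secondDiff]
  push_cast
  ring

end SecondDifference

theorem Int.one_mem_addSubgroup_of_forall_prime {H : AddSubgroup ℤ}
    (h : ∀ p : ℕ, p.Prime → ∃ t ∈ H, ¬ (p : ℤ) ∣ t) : (1 : ℤ) ∈ H := by
  obtain ⟨g, rfl⟩ := Int.subgroup_cyclic H
  simp only [← AddSubgroup.zmultiples_eq_closure, Int.mem_zmultiples_iff] at h ⊢
  by_contra hg
  have hg1 : g.natAbs ≠ 1 := fun h1 => hg (Int.natAbs_dvd_natAbs.mp (by simp [h1]))
  obtain ⟨p, hp, hpg⟩ := Nat.exists_prime_and_dvd hg1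
  obtain ⟨t, hgt, hpt⟩ := h p hp
  exact hpt ((Int.natCast_dvd.mpr hpg).trans hgt)

namespace Multigraph

variable {V E : Type*}

theorem cyc_eq_finRotate (m : ℕ) : (cyc : Fin m → Fin m) = finRotate m := by
  rcases m with _ | m
  · exact funext fun i => i.elim0
  · funext i
    ext
    simp [cyc, finRotate_apply, Fin.val_add]

section Connects

variable {G : Multigraph V E} {e : E} {a b : V}

theorem Connects.symm (h : G.Connects e a b) : G.Connects e b a :=
  Or.symm h

theorem Connects.sym2_eq (h : G.Connects e a b) : s(G.s e, G.t e) = s(a, b) :=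
  Sym2.eq_iff.mpr h

theorem Connects.exists_units_mul_sub (h : G.Connects e a b) :
    ∃ σ : ℤˣ, ∀ φ : V → ℤ, φ a - φ b = σ * (φ (G.s e) - φ (G.t e)) := by
  rcases h with ⟨rfl, rfl⟩ | ⟨rfl, rfl⟩
  · exact ⟨1, fun φ => by simp⟩
  · exact ⟨-1, fun φ => by simp⟩

end Connects

variable (G : Multigraph V E)

section Reachability

def edgeGraph (S : Set E) : SimpleGraph V :=
  SimpleGraph.fromRel fun a b => ∃ e ∈ S, G.Connects e a b

variable {G}

theorem exists_mem_connects_of_adj {S : Set E} {a b : V} (h : (G.edgeGraph S).Adj a b) :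
    ∃ e ∈ S, G.Connects e a b := by
  obtain ⟨-, ⟨e, he, hc⟩ | ⟨e, he, hc⟩⟩ := (SimpleGraph.fromRel_adj _ _ _).mp h
  exacts [⟨e, he, hc⟩, ⟨e, he, hc.symm⟩]

theorem edgeGraph_reachable_of_mem {S : Set E} {e : E} (he : e ∈ S) :
    (G.edgeGraph S).Reachable (G.s e) (G.t e) := by
  by_cases h : G.s e = G.t e
  · exact h ▸ SimpleGraph.Reachable.refl _
  · exact SimpleGraph.Adj.reachable ((SimpleGraph.fromRel_adj _ _ _).mpr
      ⟨h, Or.inl ⟨e, he, Or.inl ⟨rfl, rfl⟩⟩⟩)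

theorem exists_isCircuit_of_isPath {S : Set E} {e₀ : E} (he₀ : e₀ ∉ S)
    {q : (G.edgeGraph S).Walk (G.s e₀) (G.t e₀)} (hq : q.IsPath) :
    ∃ (m : ℕ) (v : Fin m → V) (ed : Fin m → E), G.IsCircuit v ed ∧ ∀ i, ed i = e₀ ∨ ed i ∈ S := by
  choose f hfS hfc using fun i (hi : i < q.length) =>
    exists_mem_connects_of_adj (q.adj_getVert_succ hi)
  have hinj : ∀ i j, i ≤ q.length → j ≤ q.length → q.getVert i = q.getVert j → i = j :=
    fun i j hi hj h => hq.getVert_injOn hi hj h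
  let ed : Fin (q.length + 1) → E := fun i => if h : i.1 < q.length then f i h else e₀
  refine ⟨q.length + 1, fun i => q.getVert i, ed, ⟨Nat.succ_pos _, ?_, ?_, ?_⟩, ?_⟩
  · exact fun i j hij => Fin.ext (hinj i j (by omega) (by omega) hij)
  · intro i j hij
    simp only [ed] at hij
    split_ifs at hij with hi hj hj
    · have h := (hfc i hi).sym2_eq.symm.trans (hij ▸ (hfc j hj).sym2_eq)
      rcases Sym2.eq_iff.mp h with ⟨h₁, -⟩ | ⟨h₁, h₂⟩
      · exact Fin.ext (hinj _ _ (by omega) (by omega) h₁)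
      · have := hinj _ _ (by omega) (by omega) h₁
        have := hinj _ _ (by omega) (by omega) h₂
        omega
    · exact absurd (hij ▸ hfS i hi) he₀
    · exact absurd (hij ▸ hfS j hj) he₀
    · exact Fin.ext (by omega)
  · intro i
    by_cases hi : i.1 < q.length
    · have : (cyc i).1 = i.1 + 1 := Nat.mod_eq_of_lt (by omega)
      simpa only [ed, dif_pos hi, this] using hfc i hi
    · have hi' : i.1 = q.length := by omega
      have : (cyc i).1 = 0 := by simp [cyc, hi']
      simp only [ed, dif_neg hi, this, hi', q.getVert_length, q.getVert_zero]
      exact Or.inr ⟨rfl, rfl⟩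
  · intro i
    simp only [ed]
    split_ifs with hi
    exacts [Or.inr (hfS i hi), Or.inl rfl]

end Reachability

variable (l : E → ℕ)

def coboundaryMod : (V → ℤ) →+ ((e : E) → ZMod (l e)) where
  toFun φ e := ((φ (G.s e) - φ (G.t e) : ℤ) : ZMod (l e))
  map_zero' := by ext; simp
  map_add' φ ψ := by funext e; simp only [Pi.add_apply]; push_cast; ring

theorem coboundaryMod_apply (φ : V → ℤ) (e : E) :
    G.coboundaryMod l φ e = ((φ (G.s e) - φ (G.t e) : ℤ) : ZMod (l e)) := rfl

theorem surjective_coboundaryMod_iff :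
    Function.Surjective (G.coboundaryMod l) ↔
      ∀ c : E → ℤ, ∃ φ : V → ℤ, ∀ e, (l e : ℤ) ∣ φ (G.s e) - φ (G.t e) - c e := by
  simp only [← ZMod.intCast_zmod_eq_zero_iff_dvd, Int.cast_sub, sub_eq_zero]
  refine ⟨fun h c => ?_, fun h x => ?_⟩
  · obtain ⟨φ, hφ⟩ := h fun e => (c e : ZMod (l e))
    exact ⟨φ, fun e => by simpa [coboundaryMod_apply] using congr_fun hφ e⟩
  · obtain ⟨φ, hφ⟩ := h fun e => ((x e).cast : ℤ)
    exact ⟨φ, funext fun e => by simpa [coboundaryMod_apply] using hφ e⟩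

theorem circuitCoprime_of_surjective_coboundaryMod
    (h : Function.Surjective (G.coboundaryMod l)) : G.CircuitCoprime l := by
  classical
  rw [surjective_coboundaryMod_iff] at h
  rintro m v ed ⟨hm, -, hed, hcon⟩
  by_contra hgcd
  obtain ⟨p, hp, hpgcd⟩ := Nat.exists_prime_and_dvd hgcd
  have hpl : ∀ i, (p : ℤ) ∣ l (ed i) := fun i =>
    Int.natCast_dvd_natCast.mpr (hpgcd.trans (Finset.gcd_dvd (Finset.mem_univ i)))
  let i₀ : Fin m := ⟨0, hm⟩
  obtain ⟨φ, hφ⟩ := h fun e => if e = ed i₀ then 1 else 0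
  choose σ hσ using fun i => (hcon i).exists_units_mul_sub
  have htel : ∑ i, (σ i : ℤ) * (φ (G.s (ed i)) - φ (G.t (ed i))) = 0 := by
    simp_rw [← hσ, Finset.sum_sub_distrib, cyc_eq_finRotate]
    exact sub_eq_zero.mpr (Equiv.sum_comp (finRotate m) (φ ∘ v)).symm
  have hind : ∑ i, (σ i : ℤ) * (if ed i = ed i₀ then 1 else 0) = σ i₀ := by
    simp [hed.eq_iff]
  have : (p : ℤ) ∣ ∑ i, (σ i : ℤ) *
      (φ (G.s (ed i)) - φ (G.t (ed i)) - if ed i = ed i₀ then 1 else 0) :=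
    Finset.dvd_sum fun i _ => ((hpl i).trans (hφ (ed i))).mul_left _
  rw [Finset.sum_congr rfl fun i _ => mul_sub _ _ _, Finset.sum_sub_distrib, htel, hind, zero_sub,
    dvd_neg] at this
  exact (Nat.prime_iff_prime_int.mp hp).not_dvd_one (Units.dvd_mul_right.mp (by simpa using this))

section Cut

variable [Fintype E] [DecidableEq E]

/-- `c` is the product of the labels prime to `p`, put on the side of `s e₀` of the cut left by the
edges `≠ e₀` with labels divisible by `p`; these cannot join the ends of `e₀`, as they would close a
circuit with `e₀`. -/
theorem exists_coboundaryMod_eq_single (hcc : G.CircuitCoprime l) (e₀ : E) {p : ℕ}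
    (hp : p.Prime) (hpe₀ : p ∣ l e₀) :
    ∃ c : ℤ, ¬ (p : ℤ) ∣ c ∧ ∃ φ : V → ℤ, G.coboundaryMod l φ = Pi.single e₀ (c : ZMod (l e₀)) := by
  classical
  let S : Set E := {e | e ≠ e₀ ∧ p ∣ l e}
  let U : Set V := {u | (G.edgeGraph S).Reachable (G.s e₀) u}
  have hS : ∀ e ∈ S, G.s e ∈ U ↔ G.t e ∈ U := fun e he =>
    ⟨fun h => h.trans (edgeGraph_reachable_of_mem he),
      fun h => h.trans (edgeGraph_reachable_of_mem he).symm⟩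
  have hsU : G.s e₀ ∈ U := SimpleGraph.Reachable.refl _
  have htU : G.t e₀ ∉ U := by
    intro h
    obtain ⟨q, hq⟩ := h.exists_isPath
    obtain ⟨m, v, ed, hc, hed⟩ := exists_isCircuit_of_isPath (fun h => h.1 rfl) hq
    refine hp.not_dvd_one (hcc m v ed hc ▸ Finset.dvd_gcd fun i _ => ?_)
    rcases hed i with h | h
    exacts [h ▸ hpe₀, h.2]
  let c : ℤ := ∏ e ∈ Finset.univ.filter (fun e => ¬ p ∣ l e), (l e : ℤ)
  have hc : ¬ (p : ℤ) ∣ c := by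
    rw [Prime.dvd_finsetProd_iff (Nat.prime_iff_prime_int.mp hp)]
    rintro ⟨e, he, hpe⟩
    exact (Finset.mem_filter.mp he).2 (Int.natCast_dvd_natCast.mp hpe)
  refine ⟨c, hc, fun u => if u ∈ U then c else 0, funext fun e => ?_⟩
  rw [coboundaryMod_apply]
  by_cases he : e = e₀
  · subst he
    simp [hsU, htU]
  rw [Pi.single_eq_of_ne he, ZMod.intCast_zmod_eq_zero_iff_dvd]
  by_cases hpe : p ∣ l e
  · have := hS e ⟨he, hpe⟩
    split_ifs <;> simp_all
  · have hdvd : (l e : ℤ) ∣ c :=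
      Finset.dvd_prod_of_mem _ (Finset.mem_filter.mpr ⟨Finset.mem_univ e, hpe⟩)
    split_ifs <;> simp [hdvd]

theorem surjective_coboundaryMod_of_circuitCoprime (hcc : G.CircuitCoprime l) :
    Function.Surjective (G.coboundaryMod l) := by
  have hsingle : ∀ (e₀ : E) (t : ℤ),
      Pi.single e₀ (t : ZMod (l e₀)) ∈ (G.coboundaryMod l).range := by
    intro e₀
    let H : AddSubgroup ℤ := (G.coboundaryMod l).range.comap
      ((AddMonoidHom.single (fun e => ZMod (l e)) e₀).comp (Int.castAddHom _))
    have h1 : (1 : ℤ) ∈ H := Int.one_mem_addSubgroup_of_forall_prime fun p hp => by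
      by_cases hpe : p ∣ l e₀
      · obtain ⟨c, hc, φ, hφ⟩ := G.exists_coboundaryMod_eq_single l hcc e₀ hp hpe
        exact ⟨c, ⟨φ, hφ⟩, hc⟩
      · exact ⟨l e₀, by simp [H], by exact_mod_cast hpe⟩
    intro t
    simpa [H] using H.zsmul_mem h1 t
  intro x
  refine AddMonoidHom.mem_range.mp (Pi.single_induction (· ∈ (G.coboundaryMod l).range) x
    (zero_mem _) (fun _ _ => add_mem) fun e z => ?_)
  simpa using hsingle e z.cast

theorem surjective_coboundaryMod_iff_circuitCoprime :
    Function.Surjective (G.coboundaryMod l) ↔ G.CircuitCoprime l :=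
  ⟨G.circuitCoprime_of_surjective_coboundaryMod l, G.surjective_coboundaryMod_of_circuitCoprime l⟩

end Cut

theorem blowup_s_mk (e : E) (i : Fin (l e)) : (G.blowup l).s ⟨e, i⟩ = G.pathVertex l e i := by
  rcases i with ⟨i, hi⟩
  simp only [blowup, pathVertex]
  split_ifs <;> simp_all

theorem blowup_t_mk (e : E) (i : Fin (l e)) :
    (G.blowup l).t ⟨e, i⟩ = G.pathVertex l e (i + 1) := by
  rcases i with ⟨i, hi⟩
  simp only [blowup, pathVertex]
  split_ifs <;> simp_all <;> omega

theorem pathVertex_zero (e : E) : G.pathVertex l e 0 = Sum.inl (G.s e) := rfl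

theorem pathVertex_self {e : E} (he : 1 ≤ l e) : G.pathVertex l e (l e) = Sum.inl (G.t e) := by
  simp only [pathVertex]
  split_ifs <;> first | rfl | omega

theorem pathVertex_eq_inr_iff {e e' : E} {j : ℕ} (hj : j ≤ l e) (k : Fin (l e' - 1)) :
    G.pathVertex l e j = Sum.inr ⟨e', k⟩ ↔ e = e' ∧ j = k + 1 := by
  have := k.isLt
  simp only [pathVertex]
  split_ifs with h0 h1
  · simp only [false_iff, not_and]
    omega
  · constructor
    · rintro ⟨⟩
      simp only [true_and]
      omega
    · rintro ⟨rfl, rfl⟩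
      simp
  · simp only [false_iff, not_and]
    rintro rfl
    omega

theorem pathVertex_eq_inl_iff {e : E} (he : 1 ≤ l e) {j : ℕ} (hj : j ≤ l e) (v : V) :
    G.pathVertex l e j = Sum.inl v ↔ j = 0 ∧ G.s e = v ∨ j = l e ∧ G.t e = v := by
  simp only [pathVertex]
  split_ifs with h0 h1
  · grind
  · simp only [false_iff]
    omega
  · grind

theorem sum_elim_apply_pathVertex {φ : V → ℤ} {a : E → ℕ → ℤ} (ha₀ : ∀ e, a e 0 = φ (G.s e))
    (ha : ∀ e, a e (l e) = φ (G.t e)) {e : E} {j : ℕ} (hj : j ≤ l e) :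
    Sum.elim φ (fun q => a q.1 (q.2 + 1)) (G.pathVertex l e j) = a e j := by
  simp only [pathVertex]
  split_ifs with h₀ h
  · simp [h₀, ha₀]
  · simp [Nat.sub_add_cancel (Nat.one_le_iff_ne_zero.mpr h₀)]
  · simp [show j = l e by omega, ha]

section Laplacian

variable [Fintype E] [DecidableEq V] [DecidableEq E]

open Finset

theorem mdeg_blowup_apply (ψ : (V ⊕ Σ e : E, Fin (l e - 1)) → ℤ) (w : V ⊕ Σ e : E, Fin (l e - 1)) :
    (G.blowup l).mdeg (fun _ => 1) ψ w = ∑ e,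
      ((∑ i : Fin (l e), if G.pathVertex l e i = w then
          ψ (G.pathVertex l e (i + 1)) - ψ (G.pathVertex l e i) else 0) +
       ∑ i : Fin (l e), if G.pathVertex l e (i + 1) = w then
          ψ (G.pathVertex l e i) - ψ (G.pathVertex l e (i + 1)) else 0) := by
  simp only [mdeg, ← univ_sigma_univ, sum_sigma, blowup_s_mk, blowup_t_mk, Nat.cast_one,
    Int.ediv_one, sum_add_distrib]

theorem mdeg_blowup_inr (ψ : (V ⊕ Σ e : E, Fin (l e - 1)) → ℤ) (e : E) (k : Fin (l e - 1)) :
    (G.blowup l).mdeg (fun _ => 1) ψ (Sum.inr ⟨e, k⟩) =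
      secondDiff (fun j => ψ (G.pathVertex l e j)) k := by
  have hk := k.isLt
  have hP₀ : ∀ {e'} (i : Fin (l e')),
      G.pathVertex l e' i = Sum.inr ⟨e, k⟩ ↔ e' = e ∧ (i : ℕ) = k + 1 :=
    fun i => G.pathVertex_eq_inr_iff l (by omega) k
  have hP₁ : ∀ {e'} (i : Fin (l e')),
      G.pathVertex l e' (i + 1) = Sum.inr ⟨e, k⟩ ↔ e' = e ∧ (i : ℕ) + 1 = k + 1 :=
    fun i => G.pathVertex_eq_inr_iff l (by omega) k
  rw [mdeg_blowup_apply, Fintype.sum_eq_single e fun e' he' => by simp [hP₀, hP₁, he'],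
    Fintype.sum_eq_single (⟨k + 1, by omega⟩ : Fin (l e)),
    Fintype.sum_eq_single (⟨k, by omega⟩ : Fin (l e))]
  · rw [if_pos ((hP₀ _).mpr ⟨rfl, rfl⟩), if_pos ((hP₁ _).mpr ⟨rfl, rfl⟩), secondDiff]
    ring
  · intro i hi
    simp [hP₁, Fin.ext_iff] at hi ⊢
    omega
  · intro i hi
    simp [hP₀, Fin.ext_iff] at hi ⊢
    omega

theorem mdeg_blowup_inl (hl : ∀ e, 1 ≤ l e) (ψ : (V ⊕ Σ e : E, Fin (l e - 1)) → ℤ) (v : V) :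
    (G.blowup l).mdeg (fun _ => 1) ψ (Sum.inl v) = ∑ e,
      ((if G.s e = v then ψ (G.pathVertex l e 1) - ψ (G.pathVertex l e 0) else 0) +
       (if G.t e = v then ψ (G.pathVertex l e (l e - 1)) - ψ (G.pathVertex l e (l e)) else 0)) := by
  rw [mdeg_blowup_apply]
  refine sum_congr rfl fun e _ => ?_
  have he := hl e
  have hP₀ : ∀ i : Fin (l e),
      G.pathVertex l e i = Sum.inl v ↔ (i : ℕ) = 0 ∧ G.s e = v :=
    fun i => by simp [G.pathVertex_eq_inl_iff l he i.isLt.le, i.isLt.ne]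
  have hP₁ : ∀ i : Fin (l e),
      G.pathVertex l e (i + 1) = Sum.inl v ↔ (i : ℕ) + 1 = l e ∧ G.t e = v :=
    fun i => by simp [G.pathVertex_eq_inl_iff l he i.isLt]
  rw [Fintype.sum_eq_single (⟨0, he⟩ : Fin (l e)),
    Fintype.sum_eq_single (⟨l e - 1, by omega⟩ : Fin (l e))]
  · simp only [zero_add, Nat.sub_add_cancel he, pathVertex_zero, G.pathVertex_self l he,
      Sum.inl.injEq]
  · intro i hi
    simp [hP₁, Fin.ext_iff] at hi ⊢
    omega
  · intro i hi
    simp [hP₀, Fin.ext_iff] at hi ⊢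
    omega

theorem surjective_coboundaryMod_of_forall_exists_eq_add_mdeg_blowup (hl : ∀ e, 1 ≤ l e)
    (h : ∀ β : (V ⊕ Σ e : E, Fin (l e - 1)) → ℤ,
      ∃ (α : V → ℤ) (ψ : (V ⊕ Σ e : E, Fin (l e - 1)) → ℤ),
        β = Sum.elim α (fun _ => 0) + (G.blowup l).mdeg (fun _ => 1) ψ) :
    Function.Surjective (G.coboundaryMod l) := by
  rw [surjective_coboundaryMod_iff]
  intro c
  obtain ⟨α, ψ, hβ⟩ := h (Sum.elim 0 fun q => if (q.2 : ℕ) = 0 then c q.1 else 0)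
  refine ⟨fun v => ψ (Sum.inl v), fun e => ?_⟩
  have hsd : ∀ j ∈ range (l e - 1),
      secondDiff (fun j => ψ (G.pathVertex l e j)) j = if j = 0 then c e else 0 := by
    intro j hj
    simpa [mdeg_blowup_inr] using (congr_fun hβ (Sum.inr ⟨e, ⟨j, mem_range.mp hj⟩⟩)).symm
  have key := sub_eq_mul_add_sum_secondDiff (fun j => ψ (G.pathVertex l e j)) (hl e)
  rw [sum_congr rfl fun j hj => by rw [hsd j hj]] at key
  simp only [pathVertex_zero, G.pathVertex_self l (hl e), mul_ite, mul_zero, sum_ite_eq',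
    mem_range, Nat.cast_zero, zero_add, one_mul] at key
  rcases (hl e).eq_or_lt with h1 | h1
  · simp [← h1]
  · rw [if_pos (by omega)] at key
    exact ⟨ψ (G.pathVertex l e (l e - 1)) - ψ (Sum.inl (G.t e)), by linarith⟩

theorem exists_eq_add_mdeg_blowup (hl : ∀ e, 1 ≤ l e) (h : Function.Surjective (G.coboundaryMod l))
    (β : (V ⊕ Σ e : E, Fin (l e - 1)) → ℤ) :
    ∃ (α : V → ℤ) (ψ : (V ⊕ Σ e : E, Fin (l e - 1)) → ℤ),
      β = Sum.elim α (fun _ => 0) + (G.blowup l).mdeg (fun _ => 1) ψ := by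
  rw [surjective_coboundaryMod_iff] at h
  let b : E → ℕ → ℤ := fun e j => if hj : j < l e - 1 then β (Sum.inr ⟨e, ⟨j, hj⟩⟩) else 0
  obtain ⟨φ, hφ⟩ := h fun e => ∑ j ∈ range (l e - 1), (j + 1) * b e j
  choose a ha₀ ha hab using fun e => exists_secondDiff_eq (hl e) (b e) _ _ (hφ e)
  let ψ : (V ⊕ Σ e : E, Fin (l e - 1)) → ℤ := Sum.elim φ fun q => a q.1 (q.2 + 1)
  refine ⟨fun v => β (Sum.inl v) - (G.blowup l).mdeg (fun _ => 1) ψ (Sum.inl v), ψ, funext ?_⟩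
  rintro (v | ⟨e, k⟩)
  · simp
  · have hk := k.isLt
    have hψ : ∀ j, j ≤ l e → ψ (G.pathVertex l e j) = a e j :=
      fun j hj => G.sum_elim_apply_pathVertex l ha₀ ha hj
    simp only [Pi.add_apply, Sum.elim_inr, zero_add, mdeg_blowup_inr, secondDiff]
    rw [hψ _ (by omega), hψ _ (by omega), hψ _ (by omega), ← secondDiff, hab]
    simp [b, hk]

theorem exists_cartier_mdeg_eq (hl : ∀ e, 1 ≤ l e) (α : V → ℤ)
    (ψ : (V ⊕ Σ e : E, Fin (l e - 1)) → ℤ)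
    (hψ : (G.blowup l).mdeg (fun _ => 1) ψ = Sum.elim α (fun _ => 0)) :
    ∃ φ : V → ℤ, G.Cartier l φ ∧ G.mdeg l φ = α := by
  have haff : ∀ e j, j ≤ l e → ψ (G.pathVertex l e j) =
      ψ (G.pathVertex l e 0) + j * (ψ (G.pathVertex l e 1) - ψ (G.pathVertex l e 0)) :=
    fun e j hj => eq_add_mul_of_secondDiff_eq_zero (fun k hk => by
      simpa [mdeg_blowup_inr] using congr_fun hψ (Sum.inr ⟨e, ⟨k, by omega⟩⟩)) hj
  set d : E → ℤ := fun e => ψ (G.pathVertex l e 1) - ψ (G.pathVertex l e 0)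
  have hlast : ∀ e, ψ (Sum.inl (G.t e)) - ψ (Sum.inl (G.s e)) = l e * d e := fun e => by
    simp only [d]
    rw [← G.pathVertex_self l (hl e), haff e (l e) le_rfl, pathVertex_zero]
    ring
  have hprev : ∀ e, ψ (G.pathVertex l e (l e - 1)) - ψ (G.pathVertex l e (l e)) = - d e :=
    fun e => by
      simp only [d]
      rw [haff e _ (Nat.sub_le _ _), haff e _ le_rfl, Nat.cast_sub (hl e)]
      ring
  have hl₀ : ∀ e, (l e : ℤ) ≠ 0 := fun e => by have := hl e; omega
  refine ⟨fun v => ψ (Sum.inl v), fun e => ⟨-d e, by linarith [hlast e]⟩, funext fun v => ?_⟩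
  rw [← Sum.elim_inl α (fun _ => (0 : ℤ)) v, ← hψ, mdeg_blowup_inl G l hl, mdeg]
  refine sum_congr rfl fun e _ => ?_
  rw [hlast, hprev, show ψ (Sum.inl (G.s e)) - ψ (Sum.inl (G.t e)) = l e * (-d e) by
    linarith [hlast e], Int.mul_ediv_cancel_left _ (hl₀ e), Int.mul_ediv_cancel_left _ (hl₀ e)]

end Laplacian

end Multigraph

theorem statement11_general {V E : Type*} [Fintype E] [DecidableEq V] [DecidableEq E]
    (G : Multigraph V E)
    (l : E → ℕ) (hl : ∀ e, 1 ≤ l e) :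
    ((∀ β : (V ⊕ Σ e : E, Fin (l e - 1)) → ℤ,
        ∃ (α : V → ℤ) (ψ : (V ⊕ Σ e : E, Fin (l e - 1)) → ℤ),
          β = Sum.elim α (fun _ => 0) + (G.blowup l).mdeg (fun _ => 1) ψ) ∧
      (∀ α : V → ℤ,
        (∃ ψ : (V ⊕ Σ e : E, Fin (l e - 1)) → ℤ,
          (G.blowup l).mdeg (fun _ => 1) ψ = Sum.elim α (fun _ => 0)) →
        ∃ φ : V → ℤ, G.Cartier l φ ∧ G.mdeg l φ = α))
      ↔ G.CircuitCoprime l := by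
  rw [← G.surjective_coboundaryMod_iff_circuitCoprime l]
  exact ⟨fun h => G.surjective_coboundaryMod_of_forall_exists_eq_add_mdeg_blowup l hl h.1,
    fun h => ⟨G.exists_eq_add_mdeg_blowup l hl h,
      fun α ⟨ψ, hψ⟩ => G.exists_cartier_mdeg_eq l hl α ψ hψ⟩⟩

/-- Let `(G,l)` be a finite connected `ℕ`-labelled graph.  The
extension-by-zero map `ε̄ : coker δ → coker δ̃` (from the cokernel of the multidegree
operator of `(G,l)` to the cokernel of the Laplacian of the total blow-up graph) is an
isomorphism — i.e. it is surjective and injective — if and only if `(G,l)` is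
circuit-coprime. -/
theorem statement11 {V E : Type*} [Fintype V] [Fintype E] [DecidableEq V] [DecidableEq E]
    (G : Multigraph V E) (hG : G.Connected)
    (l : E → ℕ) (hl : ∀ e, 1 ≤ l e) :
    ((∀ β : (V ⊕ Σ e : E, Fin (l e - 1)) → ℤ,
        ∃ (α : V → ℤ) (ψ : (V ⊕ Σ e : E, Fin (l e - 1)) → ℤ),
          β = Sum.elim α (fun _ => 0) + (G.blowup l).mdeg (fun _ => 1) ψ) ∧
      (∀ α : V → ℤ,
        (∃ ψ : (V ⊕ Σ e : E, Fin (l e - 1)) → ℤ,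
          (G.blowup l).mdeg (fun _ => 1) ψ = Sum.elim α (fun _ => 0)) →
        ∃ φ : V → ℤ, G.Cartier l φ ∧ G.mdeg l φ = α))
      ↔ G.CircuitCoprime l :=
  statement11_general G l hl
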